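/- arXiv:2402.14965 — 2 statements merged into one kernel-verified Lean document; each statement's English description precedes it below -/
import Mathlib

section
/- Let P be a rectangular polyomino whose only hole is an I-slit of size 2 (a straight slit of length 2). Then there is no surjective consistent mapping from P onto the surface C of the unit cube; consequently P does not fold onto C. -/
/-!
Common formal framework: polyominoes (as square complexes with possible slits),
their topological realisations, folded states, ambient isotopy, foldings onto the
surface of the unit cube, unlinks, and consistent mappings.
-/

open Classical
noncomputable section

namespace CubeFold

/-- Euclidean plane. -/
abbrev R2 := EuclideanSpace ℝ (Fin 2)
/-- Euclidean 3-space. -/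
abbrev R3 := EuclideanSpace ℝ (Fin 3)

/-- A cell (unit square) of the integer lattice, indexed by its lower-left corner. -/
abbrev Cell := ℤ × ℤ

/-- Two cells are adjacent if they share an edge of the lattice. -/
def cellAdj (c d : Cell) : Prop := (c.1 - d.1).natAbs + (c.2 - d.2).natAbs = 1

instance (c d : Cell) : Decidable (cellAdj c d) :=
  inferInstanceAs (Decidable ((c.1 - d.1).natAbs + (c.2 - d.2).natAbs = 1))

/-- A polyomino: a finite nonempty set of lattice cells, together with a symmetric set of
`joins` (pairs of adjacent cells glued along their common edge; adjacent cells that are not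
joined are separated by a slit), such that the whole figure is edge-connected.
Since the cells sit at given positions of the plane, such a polyomino automatically admits a
flat placement in which distinct faces overlap only in edges. -/
structure Polyomino where
  cells : Finset Cell
  nonempty : cells.Nonempty
  joins : Finset (Cell × Cell)
  joins_symm : ∀ e ∈ joins, (e.2, e.1) ∈ joins
  joins_mem : ∀ e ∈ joins, e.1 ∈ cells ∧ e.2 ∈ cells
  joins_adj : ∀ e ∈ joins, cellAdj e.1 e.2
  connected : ∀ c ∈ cells, ∀ d ∈ cells,
    Relation.ReflTransGen (fun a b => (a, b) ∈ joins) c d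

/-- The closed unit square in the plane. -/
def unitSq : Set R2 := {x | 0 ≤ x 0 ∧ x 0 ≤ 1 ∧ 0 ≤ x 1 ∧ x 1 ≤ 1}

def mk2 (a b : ℝ) : R2 := !₂[a, b]

/-- The point of the plane corresponding to local coordinates `x` inside cell `c`. -/
def cellPt (c : Cell) (x : R2) : R2 := mk2 ((c.1 : ℝ) + x 0) ((c.2 : ℝ) + x 1)

/-- Index space: disjoint union of the (closed) unit squares of the cells of `P`. -/
def PolyIdx (P : Polyomino) : Type := {c : Cell // c ∈ P.cells} × {x : R2 // x ∈ unitSq}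

instance (P : Polyomino) : TopologicalSpace (PolyIdx P) := by
  unfold PolyIdx; infer_instance

/-- Gluing relation: two points of (possibly different) cells are identified when they occupy
the same point of the plane and their cells are equal or joined. -/
def glueRel (P : Polyomino) : PolyIdx P → PolyIdx P → Prop := fun a b =>
  cellPt a.1.1 a.2.1 = cellPt b.1.1 b.2.1 ∧ (a.1.1 = b.1.1 ∨ (a.1.1, b.1.1) ∈ P.joins)

/-- The underlying topological space of the polyomino `P` (a square complex). -/
def PolySpace (P : Polyomino) : Type := Quot (glueRel P)

instance (P : Polyomino) : TopologicalSpace (PolySpace P) := by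
  unfold PolySpace; infer_instance

/-- The point of `PolySpace P` lying in cell `c` with local coordinates `x`. -/
def pt (P : Polyomino) (c : Cell) (hc : c ∈ P.cells) (x : R2) (hx : x ∈ unitSq) :
    PolySpace P :=
  Quot.mk (glueRel P) (⟨c, hc⟩, ⟨x, hx⟩)

/-- The canonical flat placement of `P` in the plane. -/
def flatMap (P : Polyomino) : PolySpace P → R2 :=
  Quot.lift (fun a => cellPt a.1.1 a.2.1) (fun _ _ h => h.1)

/-- A map `PolySpace P → R3` is piecewise linear if each cell can be covered by finitely
many convex pieces on each of which the map is affine. -/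
def IsPLMap (P : Polyomino) (F : PolySpace P → R3) : Prop :=
  ∀ (c : Cell) (hc : c ∈ P.cells), ∃ S : Finset (Finset R2),
    (∀ x ∈ unitSq, ∃ T ∈ S, x ∈ convexHull ℝ (T : Set R2)) ∧
    ∀ T ∈ S, ∃ g : R2 →ᵃ[ℝ] R3, ∀ x, ∀ hx : x ∈ unitSq,
      x ∈ convexHull ℝ (T : Set R2) → F (pt P c hc x hx) = g x

/-- A folded state of `P`: a piecewise linear topological embedding of `P` into `R3`. -/
structure FoldedState (P : Polyomino) where
  toFun : PolySpace P → R3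
  embedding : Topology.IsEmbedding toFun
  pl : IsPLMap P toFun

/-- A folding blueprint: a map whose restriction to each face of `P` is an isometry. -/
def IsBlueprint (P : Polyomino) (β : PolySpace P → R3) : Prop :=
  ∀ (c : Cell) (hc : c ∈ P.cells), ∀ (x y : R2) (hx : x ∈ unitSq) (hy : y ∈ unitSq),
    dist (β (pt P c hc x hx)) (β (pt P c hc y hy)) = dist x y

/-- A folded state `F` (ε-)corresponds to a blueprint `β` (with the fixed ε = 1/2). -/
def Corresponds (P : Polyomino) (F : FoldedState P) (β : PolySpace P → R3) : Prop :=
  ∀ p : PolySpace P, dist (F.toFun p) (β p) < 1 / 2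

/-- A flat folding blueprint: an isometric placement of the flat polyomino inside a plane
of `R3`. -/
def IsFlatBlueprint (P : Polyomino) (β : PolySpace P → R3) : Prop :=
  ∃ j : R2 → R3, Isometry j ∧ β = j ∘ flatMap P

/-- A trivial folding: a realisation of a flat folding blueprint. -/
def IsTrivialFolding (P : Polyomino) (F : FoldedState P) : Prop :=
  ∃ β : PolySpace P → R3, IsFlatBlueprint P β ∧ Corresponds P F β

/-- An ambient isotopy of `R3`: a continuous family of self-homeomorphisms starting at the
identity. -/
def IsAmbientIsotopy (H : ℝ → R3 → R3) : Prop :=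
  Continuous (fun q : ℝ × R3 => H q.1 q.2) ∧
  (∀ t : ℝ, ∃ h : R3 ≃ₜ R3, ∀ x, H t x = h x) ∧
  (∀ x, H 0 x = x)

/-- A folded state is valid (is a folding) if it is ambient isotopic to a trivial folding. -/
def ValidFolding (P : Polyomino) (F : FoldedState P) : Prop :=
  ∃ H : ℝ → R3 → R3, IsAmbientIsotopy H ∧
    ∃ G : FoldedState P, IsTrivialFolding P G ∧ ∀ p, H 1 (F.toFun p) = G.toFun p

/-- The surface of the unit cube in `R3`. -/
def cubeSurface : Set R3 :=
  {p | (∀ i, 0 ≤ p i ∧ p i ≤ 1) ∧ ∃ i, p i = 0 ∨ p i = 1}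

/-- The face of the unit cube with normal direction `i` at height `0` or `1`. -/
def cubeFace (i : Fin 3) (b : Bool) : Set R3 :=
  {p | (∀ j, 0 ≤ p j ∧ p j ≤ 1) ∧ p i = if b then 1 else 0}

/-- `P` folds onto the surface of the unit cube: some valid folding of `P` corresponds to a
surjective folding blueprint `β : P → C`. -/
def FoldsOntoCube (P : Polyomino) : Prop :=
  ∃ F : FoldedState P, ValidFolding P F ∧
    ∃ β : PolySpace P → R3, IsBlueprint P β ∧ Set.range β = cubeSurface ∧
      Corresponds P F β

/-- `n` disjoint round circles, side by side in a plane. -/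
def stdCircles (n : ℕ) : Set R3 :=
  {p | ∃ k : ℕ, k < n ∧ (p 0 - 3 * (k : ℝ)) ^ 2 + (p 1) ^ 2 = 1 ∧ p 2 = 0}

/-- A subset of `R3` is an unlink if some ambient isotopy carries it to a finite collection
of circles embedded side by side in a plane. -/
def IsUnlink (L : Set R3) : Prop :=
  ∃ (n : ℕ) (H : ℝ → R3 → R3), IsAmbientIsotopy H ∧ (fun x => H 1 x) '' L = stdCircles n

/-- The (topological) boundary of the polyomino surface: the set of points having no open
neighbourhood homeomorphic to the plane. -/
def polyBoundary (P : Polyomino) : Set (PolySpace P) :=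
  {p | ¬ ∃ U : Set (PolySpace P), IsOpen U ∧ p ∈ U ∧ Nonempty (U ≃ₜ R2)}

/-- A polyhedron in `R3`: a finite union of convex polytopes. -/
def IsPolyhedron (Q : Set R3) : Prop :=
  ∃ S : Finset (Finset R3), Q = ⋃ T ∈ S, convexHull ℝ (T : Set R3)

/-- A polyhedral sphere: a polyhedron homeomorphic to the 2-sphere. -/
def IsPolyhedralSphere (Q : Set R3) : Prop :=
  IsPolyhedron Q ∧ Nonempty (Q ≃ₜ Metric.sphere (0 : R3) 1)

/-! ### Consistent mappings to the combinatorial cube -/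

/-- The corner of cell `c` with local coordinates `k`. -/
def cornerPt (c : Cell) (k : Fin 2 × Fin 2) : ℤ × ℤ :=
  (c.1 + ((k.1 : ℕ) : ℤ), c.2 + ((k.2 : ℕ) : ℤ))

/-- Number of coordinates in which two vertices of the cube differ. -/
def vdiff (u v : Fin 3 → Bool) : ℕ := (Finset.univ.filter fun i => u i ≠ v i).card

/-- Number of coordinates in which two corners of a square differ. -/
def kdiff (k k' : Fin 2 × Fin 2) : ℕ :=
  (if k.1 = k'.1 then 0 else 1) + (if k.2 = k'.2 then 0 else 1)

/-- A consistent mapping from the polyomino `P` to the unit cube, viewed as a homomorphism of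
square complexes: cells are mapped to faces (`Fin 3 × Bool`: a normal direction together with a
side) and corners of cells to vertices of the cube (`Fin 3 → Bool`), so that each cell is mapped
isomorphically onto a face and identified corners of joined cells have equal images (hence edges
are mapped to edges and all incidences are preserved). -/
structure ConsMap (P : Polyomino) where
  cellMap : Cell → Fin 3 × Bool
  vertMap : Cell → Fin 2 × Fin 2 → (Fin 3 → Bool)
  vert_on_face : ∀ c ∈ P.cells, ∀ k, vertMap c k (cellMap c).1 = (cellMap c).2
  face_iso : ∀ c ∈ P.cells, ∀ k k', vdiff (vertMap c k) (vertMap c k') = kdiff k k'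
  join_compat : ∀ e ∈ P.joins, ∀ k k', cornerPt e.1 k = cornerPt e.2 k' →
    vertMap e.1 k = vertMap e.2 k'

/-- A consistent mapping is surjective if every face of the cube is the image of a cell. -/
def ConsMap.Surjective {P : Polyomino} (φ : ConsMap P) : Prop :=
  ∀ f : Fin 3 × Bool, ∃ c ∈ P.cells, φ.cellMap c = f

/-! ### Rectangular polyominoes, holes and slits -/

/-- The cells of the full `m × n` rectangle (`m` columns, `n` rows). -/
def rectCells (m n : ℕ) : Finset Cell := Finset.Icc (0, 0) ((m : ℤ) - 1, (n : ℤ) - 1)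

/-- All joins between adjacent cells of `S`. -/
def fullJoins (S : Finset Cell) : Finset (Cell × Cell) :=
  (S ×ˢ S).filter fun e => cellAdj e.1 e.2

/-- The two cells separated by the vertical lattice edge from `(p,q)` to `(p,q+1)`. -/
def vE (p q : ℤ) : Cell × Cell := ((p - 1, q), (p, q))

/-- The two cells separated by the horizontal lattice edge from `(p,q)` to `(p+1,q)`. -/
def hE (p q : ℤ) : Cell × Cell := ((p, q - 1), (p, q))

/-- Both orientations of a join. -/
def remPair (e : Cell × Cell) : Finset (Cell × Cell) := {e, (e.2, e.1)}

/-- A lattice vertex interior to the `m × n` rectangle. -/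
def intVert (m n : ℕ) (v : ℤ × ℤ) : Prop :=
  1 ≤ v.1 ∧ v.1 ≤ (m : ℤ) - 1 ∧ 1 ≤ v.2 ∧ v.2 ≤ (n : ℤ) - 1

/-- The four sides of the cell `c`, as pairs of separated cells:
left, right, bottom, top. -/
def cellSide (c : Cell) : Fin 4 → Cell × Cell :=
  ![vE c.1 c.2, vE (c.1 + 1) c.2, hE c.1 c.2, hE c.1 (c.2 + 1)]

/-- `P` is the full `m × n` rectangle with exactly the joins of `R` slit open. -/
def RectWithSlits (P : Polyomino) (m n : ℕ) (R : Finset (Cell × Cell)) : Prop :=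
  P.cells = rectCells m n ∧ P.joins = fullJoins (rectCells m n) \ R

/-- `P` is an `m × n` rectangle with a single unit square hole `h` (and no other holes). -/
def RectWithUnitHole (P : Polyomino) (m n : ℕ) (h : Cell) : Prop :=
  1 ≤ h.1 ∧ h.1 ≤ (m : ℤ) - 2 ∧ 1 ≤ h.2 ∧ h.2 ≤ (n : ℤ) - 2 ∧
  P.cells = (rectCells m n).erase h ∧ P.joins = fullJoins P.cells

/-- `P` is an `m × n` rectangle with a single slit of size 1 (and no other holes). -/
def RectWithSlit1 (P : Polyomino) (m n : ℕ) : Prop :=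
  ∃ p q : ℤ,
    (intVert m n (p, q) ∧ intVert m n (p, q + 1) ∧ RectWithSlits P m n (remPair (vE p q))) ∨
    (intVert m n (p, q) ∧ intVert m n (p + 1, q) ∧ RectWithSlits P m n (remPair (hE p q)))

/-- `P` is an `m × n` rectangle with a single I-slit of size 2 (and no other holes). -/
def RectWithISlit2 (P : Polyomino) (m n : ℕ) : Prop :=
  ∃ p q : ℤ,
    (intVert m n (p, q) ∧ intVert m n (p, q + 1) ∧ intVert m n (p, q + 2) ∧
      RectWithSlits P m n (remPair (vE p q) ∪ remPair (vE p (q + 1)))) ∨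
    (intVert m n (p, q) ∧ intVert m n (p + 1, q) ∧ intVert m n (p + 2, q) ∧
      RectWithSlits P m n (remPair (hE p q) ∪ remPair (hE (p + 1) q)))

/-- `P` is an `m × n` rectangle with a single L-slit of size 2 (and no other holes):
two perpendicular slit edges meeting at the interior vertex `(p,q)`. -/
def RectWithLSlit2 (P : Polyomino) (m n : ℕ) : Prop :=
  ∃ p q : ℤ, ∃ s t : Bool,
    intVert m n (p, q) ∧
    intVert m n (p, q + (if s then 1 else -1)) ∧
    intVert m n (p + (if t then 1 else -1), q) ∧
    RectWithSlits P m n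
      (remPair (vE p (if s then q else q - 1)) ∪ remPair (hE (if t then p else p - 1) q))

/-- `P` is an `m × n` rectangle with a single U-slit of size 3 (and no other holes):
three of the four sides of the cell `c` are slit open. -/
def RectWithUSlit3 (P : Polyomino) (m n : ℕ) : Prop :=
  ∃ c : Cell, ∃ k : Fin 4,
    intVert m n (c.1, c.2) ∧ intVert m n (c.1 + 1, c.2) ∧
    intVert m n (c.1, c.2 + 1) ∧ intVert m n (c.1 + 1, c.2 + 1) ∧
    RectWithSlits P m n ((Finset.univ.erase k).biUnion fun k' => remPair (cellSide c k'))

/-- `P` is an `m × n` rectangle whose holes are exactly the unit square holes `H`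
(all interior, pairwise non-touching) and no other holes. -/
def RectWithUnitHoles (P : Polyomino) (m n : ℕ) (H : Finset Cell) : Prop :=
  (∀ h ∈ H, 1 ≤ h.1 ∧ h.1 ≤ (m : ℤ) - 2 ∧ 1 ≤ h.2 ∧ h.2 ≤ (n : ℤ) - 2) ∧
  (∀ h ∈ H, ∀ h' ∈ H, h ≠ h' → 2 ≤ max (h.1 - h'.1).natAbs (h.2 - h'.2).natAbs) ∧
  P.cells = rectCells m n \ H ∧ P.joins = fullJoins P.cells

/-- Two unit square holes cooperate: they lie in the same or adjacent rows (resp. columns) and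
the number of columns (resp. rows) strictly between them is odd. -/
def Cooperate (h₁ h₂ : Cell) : Prop :=
  ((h₁.2 - h₂.2).natAbs ≤ 1 ∧ Odd ((h₁.1 - h₂.1).natAbs - 1)) ∨
  ((h₁.1 - h₂.1).natAbs ≤ 1 ∧ Odd ((h₁.2 - h₂.2).natAbs - 1))

/-- The images under a consistent mapping of the four boundary edges of a unit square hole `h`
(each edge given as the unordered pair of the images of its two endpoints):
the facing sides of the right, left, top and bottom neighbouring cell of `h`. -/
def holeSideEdge {P : Polyomino} (φ : ConsMap P) (h : Cell) : Fin 4 → Set (Fin 3 → Bool) :=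
  ![{φ.vertMap (h.1 + 1, h.2) (0, 0), φ.vertMap (h.1 + 1, h.2) (0, 1)},
    {φ.vertMap (h.1 - 1, h.2) (1, 0), φ.vertMap (h.1 - 1, h.2) (1, 1)},
    {φ.vertMap (h.1, h.2 + 1) (0, 0), φ.vertMap (h.1, h.2 + 1) (1, 0)},
    {φ.vertMap (h.1, h.2 - 1) (0, 1), φ.vertMap (h.1, h.2 - 1) (1, 1)}]

/-- A consistent mapping is good if for no unit square hole of `H` all four boundary edges of
the hole are mapped to a single edge of the cube. -/
def ConsMap.IsGood {P : Polyomino} (φ : ConsMap P) (H : Finset Cell) : Prop :=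
  ∀ h ∈ H, ¬ ∀ k k' : Fin 4, holeSideEdge φ h k = holeSideEdge φ h k'

/-! ### Tree-shaped polyominoes and bounding boxes -/

/-- A polyomino is tree-shaped if its dual graph is a tree; since it is connected by
definition, this amounts to having exactly `#cells - 1` (unordered) joins. -/
def TreeShaped (P : Polyomino) : Prop := P.joins.card = 2 * (P.cells.card - 1)

/-- `P` has bounding box with lower-left cell `(x0, y0)`, `w` columns and `h` rows. -/
def HasBoundingBox (P : Polyomino) (x0 y0 : ℤ) (w h : ℕ) : Prop :=
  (∀ c ∈ P.cells, x0 ≤ c.1 ∧ c.1 < x0 + w ∧ y0 ≤ c.2 ∧ c.2 < y0 + h) ∧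
  (∃ c ∈ P.cells, c.1 = x0) ∧ (∃ c ∈ P.cells, c.1 = x0 + w - 1) ∧
  (∃ c ∈ P.cells, c.2 = y0) ∧ (∃ c ∈ P.cells, c.2 = y0 + h - 1)

/-- Reachability in the dual graph of `P` avoiding the set `S` of cells. -/
def ReachAvoid (P : Polyomino) (S : Cell → Prop) : Cell → Cell → Prop :=
  Relation.ReflTransGen fun u v => (u, v) ∈ P.joins ∧ ¬ S u ∧ ¬ S v

/-- The cells of the polyomino `P_W`. -/
def pwCells : Finset Cell := {(1, 1), (2, 1), (3, 1), (3, 2), (4, 2), (4, 3), (4, 4)}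

/-- The eight signed-permutation symmetries of the lattice, composed with a translation. -/
def sym8 (s₁ s₂ sw : Bool) (t : Cell) (p : Cell) : Cell :=
  let q : Cell := if sw then (p.2, p.1) else p
  (t.1 + (if s₁ then -q.1 else q.1), t.2 + (if s₂ then -q.2 else q.2))

/-- `P` is congruent (up to rotation, reflection and translation) to the polyomino `P_W`. -/
def CongruentToPW (P : Polyomino) : Prop :=
  ∃ s₁ s₂ sw : Bool, ∃ t : Cell,
    P.cells.image (sym8 s₁ s₂ sw t) = pwCells ∧
    P.joins.image (fun e => (sym8 s₁ s₂ sw t e.1, sym8 s₁ s₂ sw t e.2)) = fullJoins pwCells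

/-!
A consistent mapping `φ` assigns to each cell the cube coordinates `φ.hDir c` and `φ.vDir c` that
flip along its horizontal and its vertical edges; they are distinct and differ from the normal of
the image face. A join forces equal `hDir` within a column and equal `vDir` within a row. In the
slit rectangle every column is joined through, and so is every row except the rows `q` and `q + 1`
beside the slit.

If `φ` is surjective, the face with normal `hDir c` is hit, so two columns have different
directions; every unslit row is transversal to both, hence runs in the third direction
`β = φ.vDir (0, 0)`, and no column runs in direction `β`. The two faces with normal `β` can then
only be covered in the slit rows. Following the `β`-coordinate of the corners up the column left of
the slit from row `q - 1` to row `q + 2` shows that covering both of them makes exactly one of the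
two cells left of the slit run in direction `β`. Going around the slit on both sides shows that the
two cells right of the slit run in the same two directions. Every column is transversal to both, so
all columns run in the remaining direction, a contradiction.

A folding blueprint restricts on each cell to an isometry of the unit square into the cube surface,
which maps the square onto a face and its corners to vertices; this yields a surjective consistent
mapping.
-/

def flipAt (d : Fin 3) (u : Fin 3 → Bool) : Fin 3 → Bool := fun j => xor (u j) (decide (j = d))

def diffCoord (u v : Fin 3 → Bool) : Fin 3 := if u 0 != v 0 then 0 else if u 1 != v 1 then 1 else 2

lemma flipAt_apply (d : Fin 3) (u : Fin 3 → Bool) (j : Fin 3) :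
    flipAt d u j = xor (u j) (decide (j = d)) := rfl

lemma eq_flipAt_diffCoord {u v : Fin 3 → Bool} (h : vdiff u v = 1) :
    v = flipAt (diffCoord u v) u := by
  revert u v
  decide

lemma ne_of_vdiff_flipAt_flipAt {u : Fin 3 → Bool} {d e : Fin 3}
    (h : vdiff (flipAt d u) (flipAt e u) = 2) : d ≠ e := by
  revert u d e
  decide

set_option synthInstance.maxSize 4000 in
lemma eq_flipAt_flipAt_of_vdiff {u v : Fin 3 → Bool} {d e : Fin 3} (hde : d ≠ e)
    (hd : vdiff (flipAt d u) v = 1) (he : vdiff (flipAt e u) v = 1) (huv : vdiff u v = 2) :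
    v = flipAt e (flipAt d u) := by
  revert u v d e
  decide

lemma flipAt_comm (u : Fin 3 → Bool) (d e : Fin 3) :
    flipAt d (flipAt e u) = flipAt e (flipAt d u) := by
  revert u d e
  decide

lemma flipAt_left_injective (u : Fin 3 → Bool) : Function.Injective fun d => flipAt d u := by
  revert u
  decide

lemma flipAt_self_apply (d : Fin 3) (u : Fin 3 → Bool) : flipAt d u d = !u d := by
  simp [flipAt_apply]

lemma eq_or_eq_of_flipAt_flipAt_eq {u : Fin 3 → Bool} {d₀ d₁ e₀ e₁ : Fin 3} (hd : d₀ ≠ d₁)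
    (h : flipAt d₁ (flipAt d₀ u) = flipAt e₁ (flipAt e₀ u)) :
    (e₀ = d₀ ∧ e₁ = d₁) ∨ (e₀ = d₁ ∧ e₁ = d₀) := by
  revert u d₀ d₁ e₀ e₁
  decide

lemma eq_of_ne_of_ne_fin_three {a b c d : Fin 3} (hab : a ≠ b) (hca : c ≠ a) (hcb : c ≠ b)
    (hda : d ≠ a) (hdb : d ≠ b) : c = d := by
  revert a b c d
  decide

namespace ConsMap

variable {P : Polyomino} (φ : ConsMap P)

def hDir (c : Cell) : Fin 3 := diffCoord (φ.vertMap c (0, 0)) (φ.vertMap c (1, 0))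

def vDir (c : Cell) : Fin 3 := diffCoord (φ.vertMap c (0, 0)) (φ.vertMap c (0, 1))

variable {φ} {c : Cell}

lemma vertMap_one_zero (hc : c ∈ P.cells) :
    φ.vertMap c (1, 0) = flipAt (φ.hDir c) (φ.vertMap c (0, 0)) :=
  eq_flipAt_diffCoord (φ.face_iso c hc _ _)

lemma vertMap_zero_one (hc : c ∈ P.cells) :
    φ.vertMap c (0, 1) = flipAt (φ.vDir c) (φ.vertMap c (0, 0)) :=
  eq_flipAt_diffCoord (φ.face_iso c hc _ _)

lemma hDir_ne_vDir (hc : c ∈ P.cells) : φ.hDir c ≠ φ.vDir c := by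
  apply ne_of_vdiff_flipAt_flipAt (u := φ.vertMap c (0, 0))
  rw [← vertMap_one_zero hc, ← vertMap_zero_one hc, φ.face_iso c hc]
  rfl

lemma vertMap_one_one (hc : c ∈ P.cells) :
    φ.vertMap c (1, 1) = flipAt (φ.vDir c) (φ.vertMap c (1, 0)) := by
  have h := φ.face_iso c hc
  rw [vertMap_one_zero hc]
  refine eq_flipAt_flipAt_of_vdiff (hDir_ne_vDir hc) ?_ ?_ ?_
  · rw [← vertMap_one_zero hc, h]; rfl
  · rw [← vertMap_zero_one hc, h]; rfl
  · rw [h]; rfl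

lemma vertMap_one_one' (hc : c ∈ P.cells) :
    φ.vertMap c (1, 1) = flipAt (φ.hDir c) (φ.vertMap c (0, 1)) := by
  rw [vertMap_one_one hc, vertMap_one_zero hc, vertMap_zero_one hc, flipAt_comm]

lemma cellMap_fst_ne_hDir (hc : c ∈ P.cells) : (φ.cellMap c).1 ≠ φ.hDir c := by
  intro h
  have h₀ := φ.vert_on_face c hc (0, 0)
  have h₁ := φ.vert_on_face c hc (1, 0)
  rw [vertMap_one_zero hc, h, flipAt_self_apply] at h₁
  rw [h] at h₀
  rw [h₀] at h₁
  exact Bool.not_ne_self _ h₁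

lemma cellMap_fst_ne_vDir (hc : c ∈ P.cells) : (φ.cellMap c).1 ≠ φ.vDir c := by
  intro h
  have h₀ := φ.vert_on_face c hc (0, 0)
  have h₁ := φ.vert_on_face c hc (0, 1)
  rw [vertMap_zero_one hc, h, flipAt_self_apply] at h₁
  rw [h] at h₀
  rw [h₀] at h₁
  exact Bool.not_ne_self _ h₁

variable {x y : ℤ}

lemma vertMap_eq_of_join_right (h : ((x, y), (x + 1, y)) ∈ P.joins) (k : Fin 2) :
    φ.vertMap (x, y) (1, k) = φ.vertMap (x + 1, y) (0, k) :=
  φ.join_compat _ h (1, k) (0, k) (by simp [cornerPt])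

lemma vertMap_eq_of_join_up (h : ((x, y), (x, y + 1)) ∈ P.joins) (k : Fin 2) :
    φ.vertMap (x, y) (k, 1) = φ.vertMap (x, y + 1) (k, 0) :=
  φ.join_compat _ h (k, 1) (k, 0) (by simp [cornerPt])

lemma vDir_eq_of_join_right (h : ((x, y), (x + 1, y)) ∈ P.joins) :
    φ.vDir (x, y) = φ.vDir (x + 1, y) := by
  obtain ⟨hc, hc'⟩ : (x, y) ∈ P.cells ∧ (x + 1, y) ∈ P.cells := P.joins_mem _ h
  apply flipAt_left_injective (φ.vertMap (x + 1, y) (0, 0))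
  dsimp only
  rw [← vertMap_zero_one hc', ← vertMap_eq_of_join_right h 1, vertMap_one_one hc,
    vertMap_eq_of_join_right h 0]

lemma hDir_eq_of_join_up (h : ((x, y), (x, y + 1)) ∈ P.joins) :
    φ.hDir (x, y) = φ.hDir (x, y + 1) := by
  obtain ⟨hc, hc'⟩ : (x, y) ∈ P.cells ∧ (x, y + 1) ∈ P.cells := P.joins_mem _ h
  apply flipAt_left_injective (φ.vertMap (x, y + 1) (0, 0))
  dsimp only
  rw [← vertMap_one_zero hc', ← vertMap_eq_of_join_up h 1, vertMap_one_one' hc,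
    vertMap_eq_of_join_up h 0]

lemma vertMap_apply_of_join_right (h : ((x, y), (x + 1, y)) ∈ P.joins) {i : Fin 3}
    (hi : φ.hDir (x, y) ≠ i) : φ.vertMap (x + 1, y) (0, 0) i = φ.vertMap (x, y) (0, 0) i := by
  rw [← vertMap_eq_of_join_right h, vertMap_one_zero (P.joins_mem _ h).1, flipAt_apply,
    decide_eq_false hi.symm, Bool.xor_false]

lemma vertMap_apply_of_join_up (h : ((x, y), (x, y + 1)) ∈ P.joins) (i : Fin 3) :
    φ.vertMap (x, y + 1) (0, 0) i =
      xor (φ.vertMap (x, y) (0, 0) i) (decide (i = φ.vDir (x, y))) := by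
  rw [← vertMap_eq_of_join_up h, vertMap_zero_one (P.joins_mem _ h).1, flipAt_apply]

lemma vertMap_one_zero_eq_of_joins_below (hl : ((x, y), (x, y + 1)) ∈ P.joins)
    (hb : ((x, y), (x + 1, y)) ∈ P.joins) (hr : ((x + 1, y), (x + 1, y + 1)) ∈ P.joins) :
    φ.vertMap (x, y + 1) (1, 0) = φ.vertMap (x + 1, y + 1) (0, 0) := by
  rw [← vertMap_eq_of_join_up hl, vertMap_eq_of_join_right hb, vertMap_eq_of_join_up hr]

lemma vertMap_one_one_eq_of_joins_above (hl : ((x, y), (x, y + 1)) ∈ P.joins)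
    (ht : ((x, y + 1), (x + 1, y + 1)) ∈ P.joins) (hr : ((x + 1, y), (x + 1, y + 1)) ∈ P.joins) :
    φ.vertMap (x, y) (1, 1) = φ.vertMap (x + 1, y) (0, 1) := by
  rw [vertMap_eq_of_join_up hl, vertMap_eq_of_join_right ht, ← vertMap_eq_of_join_up hr]

lemma Surjective.exists_hDir_ne (hs : φ.Surjective) (c : Cell) :
    ∃ c' ∈ P.cells, φ.hDir c' ≠ φ.hDir c := by
  obtain ⟨c', hc', h⟩ := hs (φ.hDir c, true)
  exact ⟨c', hc', fun he => cellMap_fst_ne_hDir hc' (by rw [h, he])⟩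

end ConsMap

lemma _root_.Int.eq_of_forall_eq_add_one {α : Type*} {f : ℤ → α} {a b : ℤ}
    (h : ∀ t, a ≤ t → t < b → f t = f (t + 1)) {x y : ℤ} (hx : a ≤ x ∧ x ≤ b)
    (hy : a ≤ y ∧ y ≤ b) : f x = f y := by
  have key : ∀ z, a ≤ z → z ≤ b → f a = f z := by
    intro z hz
    induction z, hz using Int.leInduction with
    | base => exact fun _ => rfl
    | succ t ht ih => exact fun htb => (ih (by omega)).trans (h t ht (by omega))
  rw [← key x hx.1 hx.2, key y hy.1 hy.2]

lemma mem_rectCells {m n : ℕ} {x y : ℤ} :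
    (x, y) ∈ rectCells m n ↔ 0 ≤ x ∧ x < m ∧ 0 ≤ y ∧ y < n := by
  simp only [rectCells, Finset.mem_Icc, Prod.mk_le_mk]
  omega

structure VerticalISlit (P : Polyomino) (m n : ℕ) (p q : ℤ) : Prop where
  one_le_p : 1 ≤ p
  p_lt : p < m
  one_le_q : 1 ≤ q
  q_add_three_le : q + 3 ≤ n
  rect : RectWithSlits P m n (remPair (vE p q) ∪ remPair (vE p (q + 1)))

namespace VerticalISlit

variable {P : Polyomino} {m n : ℕ} {p q : ℤ} (hS : VerticalISlit P m n p q) {φ : ConsMap P}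
  {x y : ℤ}
include hS

lemma bounds : 1 ≤ p ∧ p < m ∧ 1 ≤ q ∧ q + 3 ≤ n :=
  ⟨hS.one_le_p, hS.p_lt, hS.one_le_q, hS.q_add_three_le⟩

lemma mem_cells : (x, y) ∈ P.cells ↔ 0 ≤ x ∧ x < m ∧ 0 ≤ y ∧ y < n := by
  rw [hS.rect.1, mem_rectCells]

lemma join_up (hx : 0 ≤ x ∧ x < m) (hy : 0 ≤ y ∧ y + 1 < n) :
    ((x, y), (x, y + 1)) ∈ P.joins := by
  rw [hS.rect.2, Finset.mem_sdiff, fullJoins, Finset.mem_filter, Finset.mem_product,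
    mem_rectCells, mem_rectCells]
  simp only [cellAdj, remPair, vE, Finset.mem_union, Finset.mem_insert, Finset.mem_singleton,
    Prod.mk.injEq]
  omega

lemma join_right (hx : 0 ≤ x ∧ x + 1 < m) (hy : 0 ≤ y ∧ y < n)
    (hslit : x + 1 ≠ p ∨ (y ≠ q ∧ y ≠ q + 1)) : ((x, y), (x + 1, y)) ∈ P.joins := by
  rw [hS.rect.2, Finset.mem_sdiff, fullJoins, Finset.mem_filter, Finset.mem_product,
    mem_rectCells, mem_rectCells]
  simp only [cellAdj, remPair, vE, Finset.mem_union, Finset.mem_insert, Finset.mem_singleton,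
    Prod.mk.injEq]
  omega

lemma eq_of_same_column {α : Type*} (f : Cell → α)
    (hf : ∀ x y, ((x, y), (x, y + 1)) ∈ P.joins → f (x, y) = f (x, y + 1))
    (hx : 0 ≤ x ∧ x < m) {y' : ℤ} (hy : 0 ≤ y ∧ y < n) (hy' : 0 ≤ y' ∧ y' < n) :
    f (x, y) = f (x, y') :=
  Int.eq_of_forall_eq_add_one (f := fun t => f (x, t)) (a := 0) (b := n - 1)
    (fun _ h₀ h₁ => hf _ _ (hS.join_up hx ⟨h₀, by omega⟩)) ⟨hy.1, by omega⟩ ⟨hy'.1, by omega⟩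

lemma eq_of_same_row {α : Type*} (f : Cell → α)
    (hf : ∀ x y, ((x, y), (x + 1, y)) ∈ P.joins → f (x, y) = f (x + 1, y))
    {x' : ℤ} (hx : 0 ≤ x ∧ x < m) (hx' : 0 ≤ x' ∧ x' < m) (hy : 0 ≤ y ∧ y < n)
    (h : (y ≠ q ∧ y ≠ q + 1) ∨ (x < p ↔ x' < p)) : f (x, y) = f (x', y) := by
  obtain ⟨_, _, _, _⟩ := hS.bounds
  have along : ∀ a b : ℤ, 0 ≤ a → b < m →
      (∀ t, a ≤ t → t < b → t + 1 ≠ p ∨ (y ≠ q ∧ y ≠ q + 1)) →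
      a ≤ x ∧ x ≤ b → a ≤ x' ∧ x' ≤ b → f (x, y) = f (x', y) := fun a b ha hb hslit =>
    Int.eq_of_forall_eq_add_one (f := fun t => f (t, y)) fun t h₀ h₁ =>
      hf _ _ (hS.join_right ⟨by omega, by omega⟩ hy (hslit t h₀ h₁))
  rcases h with h | h
  · exact along 0 (m - 1) le_rfl (by omega) (fun _ _ _ => Or.inr h) ⟨hx.1, by omega⟩
      ⟨hx'.1, by omega⟩
  · by_cases hxp : x < p
    · exact along 0 (p - 1) le_rfl (by omega) (fun _ _ _ => Or.inl (by omega)) ⟨hx.1, by omega⟩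
        ⟨hx'.1, by have := h.1 hxp; omega⟩
    · exact along p (m - 1) (by omega) (by omega) (fun _ _ _ => Or.inl (by omega))
        ⟨by omega, by omega⟩ ⟨by have := mt h.2 hxp; omega, by omega⟩

lemma hDir_eq_of_same_column (hx : 0 ≤ x ∧ x < m) {y' : ℤ} (hy : 0 ≤ y ∧ y < n)
    (hy' : 0 ≤ y' ∧ y' < n) : φ.hDir (x, y) = φ.hDir (x, y') :=
  hS.eq_of_same_column _ (fun _ _ h => ConsMap.hDir_eq_of_join_up h) hx hy hy'

lemma vDir_eq_of_same_row {x' : ℤ} (hx : 0 ≤ x ∧ x < m) (hx' : 0 ≤ x' ∧ x' < m)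
    (hy : 0 ≤ y ∧ y < n) (h : (y ≠ q ∧ y ≠ q + 1) ∨ (x < p ↔ x' < p)) :
    φ.vDir (x, y) = φ.vDir (x', y) :=
  hS.eq_of_same_row _ (fun _ _ h => ConsMap.vDir_eq_of_join_right h) hx hx' hy h

lemma hDir_ne_vDir_origin (hc : (x, y) ∈ P.cells) : φ.hDir (x, y) ≠ φ.vDir (0, 0) := by
  obtain ⟨hx₀, hxm, hy₀, hyn⟩ := hS.mem_cells.1 hc
  obtain ⟨_, _, _, _⟩ := hS.bounds
  rw [hS.hDir_eq_of_same_column ⟨hx₀, hxm⟩ ⟨hy₀, hyn⟩ ⟨le_rfl, by omega⟩,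
    hS.vDir_eq_of_same_row (x := 0) (x' := x) ⟨le_rfl, by omega⟩ ⟨hx₀, hxm⟩ ⟨le_rfl, by omega⟩
      (Or.inl ⟨by omega, by omega⟩)]
  exact ConsMap.hDir_ne_vDir (hS.mem_cells.2 ⟨hx₀, hxm, le_rfl, by omega⟩)

lemma vDir_eq_vDir_origin (hs : φ.Surjective) (hc : (x, y) ∈ P.cells)
    (hy : y ≠ q ∧ y ≠ q + 1) : φ.vDir (x, y) = φ.vDir (0, 0) := by
  obtain ⟨⟨x', y'⟩, hc', hne⟩ := hs.exists_hDir_ne (0, 0)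
  obtain ⟨hx₀, hxm, hy₀, hyn⟩ := hS.mem_cells.1 hc
  obtain ⟨hx₀', hxm', hy₀', hyn'⟩ := hS.mem_cells.1 hc'
  have hm : (0 : ℤ) < m := by omega
  have avoid : ∀ x'' y'', (x'', y'') ∈ P.cells → φ.vDir (x, y) ≠ φ.hDir (x'', y'') := by
    intro x'' y'' hc''
    obtain ⟨hx₀'', hxm'', hy₀'', hyn''⟩ := hS.mem_cells.1 hc''
    rw [hS.hDir_eq_of_same_column ⟨hx₀'', hxm''⟩ ⟨hy₀'', hyn''⟩ ⟨hy₀, hyn⟩,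
      hS.vDir_eq_of_same_row ⟨hx₀, hxm⟩ ⟨hx₀'', hxm''⟩ ⟨hy₀, hyn⟩ (Or.inl hy)]
    exact (ConsMap.hDir_ne_vDir (hS.mem_cells.2 ⟨hx₀'', hxm'', hy₀, hyn⟩)).symm
  have h₀ : ((0 : ℤ), (0 : ℤ)) ∈ P.cells := hS.mem_cells.2 ⟨le_rfl, hm, le_rfl, by omega⟩
  exact eq_of_ne_of_ne_fin_three hne (avoid _ _ hc') (avoid _ _ h₀)
    (hS.hDir_ne_vDir_origin hc').symm (hS.hDir_ne_vDir_origin h₀).symm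

lemma vertMap_apply_eq_of_same_row {x' : ℤ} (hx : 0 ≤ x ∧ x < m) (hx' : 0 ≤ x' ∧ x' < m)
    (hy : 0 ≤ y ∧ y < n) (hq : y ≠ q ∧ y ≠ q + 1) :
    φ.vertMap (x, y) (0, 0) (φ.vDir (0, 0)) = φ.vertMap (x', y) (0, 0) (φ.vDir (0, 0)) :=
  hS.eq_of_same_row (fun c => φ.vertMap c (0, 0) (φ.vDir (0, 0)))
    (fun _ _ h => (ConsMap.vertMap_apply_of_join_right h
      (hS.hDir_ne_vDir_origin (P.joins_mem _ h).1)).symm) hx hx' hy (Or.inl hq)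

lemma side_eq_of_cellMap_eq (hs : φ.Surjective) (hc : (x, y) ∈ P.cells) {b : Bool}
    (h : φ.cellMap (x, y) = (φ.vDir (0, 0), b)) :
    b = !φ.vertMap (0, q - 1) (0, 0) (φ.vDir (0, 0)) ∨
      b = φ.vertMap (0, q + 2) (0, 0) (φ.vDir (0, 0)) := by
  obtain ⟨hx₀, hxm, hy₀, hyn⟩ := hS.mem_cells.1 hc
  obtain ⟨_, _, _, _⟩ := hS.bounds
  have hface : ∀ k, φ.vertMap (x, y) k (φ.vDir (0, 0)) = b := fun k => by
    simpa [h] using φ.vert_on_face _ hc k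
  have hy : y = q ∨ y = q + 1 := by
    by_contra! hy
    exact ConsMap.cellMap_fst_ne_vDir hc (by rw [h, hS.vDir_eq_vDir_origin hs hc hy])
  rcases hy with rfl | rfl
  · left
    have hup := ConsMap.vertMap_apply_of_join_up (φ := φ)
      (hS.join_up (x := x) (y := y - 1) ⟨hx₀, hxm⟩ ⟨by omega, by omega⟩) (φ.vDir (0, 0))
    rw [sub_add_cancel, hface, hS.vDir_eq_vDir_origin hs
        (hS.mem_cells.2 ⟨hx₀, hxm, by omega, by omega⟩) ⟨by omega, by omega⟩,
      hS.vertMap_apply_eq_of_same_row ⟨hx₀, hxm⟩ ⟨le_rfl, by omega⟩ ⟨by omega, by omega⟩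
        ⟨by omega, by omega⟩] at hup
    simpa using hup
  · right
    have hup := ConsMap.vertMap_eq_of_join_up (φ := φ)
      (hS.join_up (x := x) (y := q + 1) ⟨hx₀, hxm⟩ ⟨by omega, by omega⟩) 0
    rw [← hface (0, 1), hup, show q + 1 + 1 = q + 2 by ring,
      hS.vertMap_apply_eq_of_same_row ⟨hx₀, hxm⟩ ⟨le_rfl, by omega⟩ ⟨by omega, by omega⟩
        ⟨by omega, by omega⟩]

lemma vertMap_apply_above_slit (hs : φ.Surjective) :
    φ.vertMap (0, q + 2) (0, 0) (φ.vDir (0, 0)) =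
      xor (xor (!φ.vertMap (0, q - 1) (0, 0) (φ.vDir (0, 0)))
        (decide (φ.vDir (0, 0) = φ.vDir (p - 1, q))))
        (decide (φ.vDir (0, 0) = φ.vDir (p - 1, q + 1))) := by
  obtain ⟨_, _, _, _⟩ := hS.bounds
  have up : ∀ y : ℤ, 0 ≤ y → y + 1 < n → φ.vertMap (p - 1, y + 1) (0, 0) (φ.vDir (0, 0)) =
      xor (φ.vertMap (p - 1, y) (0, 0) (φ.vDir (0, 0)))
        (decide (φ.vDir (0, 0) = φ.vDir (p - 1, y))) := fun y hy₀ hyn =>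
    ConsMap.vertMap_apply_of_join_up (hS.join_up ⟨by omega, by omega⟩ ⟨hy₀, hyn⟩) _
  have h₀ := up (q - 1) (by omega) (by omega)
  have h₂ := up (q + 1) (by omega) (by omega)
  rw [sub_add_cancel] at h₀
  rw [show q + 1 + 1 = q + 2 by ring] at h₂
  rw [hS.vertMap_apply_eq_of_same_row (x' := p - 1) ⟨le_rfl, by omega⟩ ⟨by omega, by omega⟩
      ⟨by omega, by omega⟩ ⟨by omega, by omega⟩, h₂, up q (by omega) (by omega), h₀,
    hS.vertMap_apply_eq_of_same_row (x := 0) (x' := p - 1) ⟨le_rfl, by omega⟩ ⟨by omega, by omega⟩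
      ⟨by omega, by omega⟩ ⟨by omega, by omega⟩,
    hS.vDir_eq_vDir_origin (x := p - 1) (y := q - 1) hs
      (hS.mem_cells.2 ⟨by omega, by omega, by omega, by omega⟩) ⟨by omega, by omega⟩]
  simp

lemma vDir_ne_vDir_left_of_slit (hs : φ.Surjective) :
    φ.vDir (p - 1, q) ≠ φ.vDir (p - 1, q + 1) := by
  intro heq
  have htop := hS.vertMap_apply_above_slit hs
  rw [heq, Bool.xor_assoc, Bool.xor_self, Bool.xor_false] at htop
  obtain ⟨⟨x₀, y₀⟩, hc₀, h₀⟩ := hs (φ.vDir (0, 0), false)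
  obtain ⟨⟨x₁, y₁⟩, hc₁, h₁⟩ := hs (φ.vDir (0, 0), true)
  have e₀ := hS.side_eq_of_cellMap_eq hs hc₀ h₀
  have e₁ := hS.side_eq_of_cellMap_eq hs hc₁ h₁
  rw [htop, or_self] at e₀ e₁
  exact absurd (e₁.trans e₀.symm) (by decide)

/-- Both sides of the slit lead from its lower end `(p, q)` to its upper end `(p, q + 2)`. -/
lemma flipAt_vDir_left_eq_right :
    flipAt (φ.vDir (p - 1, q + 1)) (flipAt (φ.vDir (p - 1, q)) (φ.vertMap (p - 1, q) (1, 0))) =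
      flipAt (φ.vDir (p, q + 1)) (flipAt (φ.vDir (p, q)) (φ.vertMap (p - 1, q) (1, 0))) := by
  obtain ⟨_, _, _, _⟩ := hS.bounds
  have hbot : φ.vertMap (p - 1, q) (1, 0) = φ.vertMap (p, q) (0, 0) := by
    simpa using ConsMap.vertMap_one_zero_eq_of_joins_below (φ := φ) (x := p - 1) (y := q - 1)
      (hS.join_up ⟨by omega, by omega⟩ ⟨by omega, by omega⟩)
      (hS.join_right ⟨by omega, by omega⟩ ⟨by omega, by omega⟩ (Or.inr ⟨by omega, by omega⟩))
      (hS.join_up ⟨by omega, by omega⟩ ⟨by omega, by omega⟩)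
  have htop : φ.vertMap (p - 1, q + 1) (1, 1) = φ.vertMap (p, q + 1) (0, 1) := by
    simpa using ConsMap.vertMap_one_one_eq_of_joins_above (φ := φ) (x := p - 1) (y := q + 1)
      (hS.join_up ⟨by omega, by omega⟩ ⟨by omega, by omega⟩)
      (hS.join_right ⟨by omega, by omega⟩ ⟨by omega, by omega⟩ (Or.inr ⟨by omega, by omega⟩))
      (hS.join_up ⟨by omega, by omega⟩ ⟨by omega, by omega⟩)
  have mem : ∀ x y : ℤ, 0 ≤ x → x < m → 0 ≤ y → y < n → (x, y) ∈ P.cells :=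
    fun _ _ h₀ h₁ h₂ h₃ => hS.mem_cells.2 ⟨h₀, h₁, h₂, h₃⟩
  have hleft : flipAt (φ.vDir (p - 1, q + 1)) (flipAt (φ.vDir (p - 1, q))
      (φ.vertMap (p - 1, q) (1, 0))) = φ.vertMap (p - 1, q + 1) (1, 1) := by
    rw [← ConsMap.vertMap_one_one (mem (p - 1) q (by omega) (by omega) (by omega) (by omega)),
      ConsMap.vertMap_eq_of_join_up
        (hS.join_up (x := p - 1) (y := q) ⟨by omega, by omega⟩ ⟨by omega, by omega⟩) 1,
      ← ConsMap.vertMap_one_one (mem (p - 1) (q + 1) (by omega) (by omega) (by omega) (by omega))]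
  have hright : flipAt (φ.vDir (p, q + 1)) (flipAt (φ.vDir (p, q))
      (φ.vertMap (p, q) (0, 0))) = φ.vertMap (p, q + 1) (0, 1) := by
    rw [← ConsMap.vertMap_zero_one (mem p q (by omega) (by omega) (by omega) (by omega)),
      ConsMap.vertMap_eq_of_join_up
        (hS.join_up (x := p) (y := q) ⟨by omega, by omega⟩ ⟨by omega, by omega⟩) 0,
      ← ConsMap.vertMap_zero_one (mem p (q + 1) (by omega) (by omega) (by omega) (by omega))]
  rw [hleft, htop, hbot, hright]

lemma hDir_ne_vDir_of_same_side (hc : (x, y) ∈ P.cells) {x' y' : ℤ} (hx' : 0 ≤ x' ∧ x' < m)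
    (hy' : 0 ≤ y' ∧ y' < n) (hside : x < p ↔ x' < p) : φ.hDir (x, y) ≠ φ.vDir (x', y') := by
  obtain ⟨hx₀, hxm, hy₀, hyn⟩ := hS.mem_cells.1 hc
  rw [hS.hDir_eq_of_same_column ⟨hx₀, hxm⟩ ⟨hy₀, hyn⟩ hy',
    hS.vDir_eq_of_same_row hx' ⟨hx₀, hxm⟩ hy' (Or.inr hside.symm)]
  exact ConsMap.hDir_ne_vDir (hS.mem_cells.2 ⟨hx₀, hxm, hy'⟩)

theorem not_surjective : ¬ φ.Surjective := by
  intro hs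
  obtain ⟨_, _, _, _⟩ := hS.bounds
  have hl := hS.vDir_ne_vDir_left_of_slit hs
  have hr := eq_or_eq_of_flipAt_flipAt_eq hl hS.flipAt_vDir_left_eq_right
  have avoid : ∀ c ∈ P.cells, φ.hDir c ≠ φ.vDir (p - 1, q) ∧ φ.hDir c ≠ φ.vDir (p - 1, q + 1) := by
    rintro ⟨x, y⟩ hc
    by_cases hxp : x < p
    · exact ⟨hS.hDir_ne_vDir_of_same_side hc ⟨by omega, by omega⟩ ⟨by omega, by omega⟩
          (iff_of_true hxp (by omega)),
        hS.hDir_ne_vDir_of_same_side hc ⟨by omega, by omega⟩ ⟨by omega, by omega⟩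
          (iff_of_true hxp (by omega))⟩
    · have h₀ := hS.hDir_ne_vDir_of_same_side (x' := p) (y' := q) (φ := φ) hc ⟨by omega, by omega⟩
        ⟨by omega, by omega⟩ (iff_of_false hxp (lt_irrefl p))
      have h₁ := hS.hDir_ne_vDir_of_same_side (x' := p) (y' := q + 1) (φ := φ) hc
        ⟨by omega, by omega⟩ ⟨by omega, by omega⟩ (iff_of_false hxp (lt_irrefl p))
      rcases hr with ⟨e₀, e₁⟩ | ⟨e₀, e₁⟩
      · rw [e₀] at h₀
        rw [e₁] at h₁
        exact ⟨h₀, h₁⟩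
      · rw [e₀] at h₀
        rw [e₁] at h₁
        exact ⟨h₁, h₀⟩
  have h₀ : ((0 : ℤ), (0 : ℤ)) ∈ P.cells := hS.mem_cells.2 ⟨le_rfl, by omega, le_rfl, by omega⟩
  obtain ⟨c, hc, hne⟩ := hs.exists_hDir_ne (0, 0)
  exact hne (eq_of_ne_of_ne_fin_three hl (avoid c hc).1 (avoid c hc).2 (avoid _ h₀).1
    (avoid _ h₀).2)

end VerticalISlit

namespace Polyomino

def transpose (P : Polyomino) : Polyomino where
  cells := P.cells.map (Equiv.prodComm ℤ ℤ).toEmbedding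
  nonempty := P.nonempty.map
  joins := P.joins.map ((Equiv.prodComm ℤ ℤ).prodCongr (Equiv.prodComm ℤ ℤ)).toEmbedding
  joins_symm e he := by
    rw [Finset.mem_map_equiv] at he ⊢
    exact P.joins_symm _ he
  joins_mem e he := by
    rw [Finset.mem_map_equiv] at he
    simp only [Finset.mem_map_equiv]
    exact P.joins_mem _ he
  joins_adj e he := by
    rw [Finset.mem_map_equiv] at he
    have := P.joins_adj _ he
    simp only [cellAdj, Equiv.prodCongr_symm, Equiv.prodComm_symm, Equiv.prodCongr_apply,
      Equiv.prodComm_apply, Prod.map_fst, Prod.map_snd, Prod.fst_swap, Prod.snd_swap] at this ⊢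
    omega
  connected c hc d hd := by
    rw [Finset.mem_map_equiv] at hc hd
    simpa [Function.onFun] using Relation.ReflTransGen.lift Prod.swap
      (fun a b h => by simpa [Function.onFun, Finset.mem_map_equiv] using h) _ _
      (P.connected _ hc _ hd)

variable {P : Polyomino}

lemma mem_transpose_cells {c : Cell} : c ∈ P.transpose.cells ↔ c.swap ∈ P.cells :=
  Finset.mem_map_equiv

lemma mem_transpose_joins {e : Cell × Cell} :
    e ∈ P.transpose.joins ↔ (e.1.swap, e.2.swap) ∈ P.joins :=
  Finset.mem_map_equiv

end Polyomino

def ConsMap.transpose {P : Polyomino} (φ : ConsMap P) : ConsMap P.transpose where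
  cellMap c := φ.cellMap c.swap
  vertMap c k := φ.vertMap c.swap k.swap
  vert_on_face c hc k := φ.vert_on_face _ (Polyomino.mem_transpose_cells.1 hc) _
  face_iso c hc k k' := by
    rw [φ.face_iso _ (Polyomino.mem_transpose_cells.1 hc)]
    exact add_comm _ _
  join_compat e he k k' h := by
    refine φ.join_compat _ (Polyomino.mem_transpose_joins.1 he) _ _ ?_
    simp only [cornerPt, Prod.ext_iff, Prod.fst_swap, Prod.snd_swap] at h ⊢
    exact h.symm

lemma ConsMap.Surjective.transpose {P : Polyomino} {φ : ConsMap P} (hs : φ.Surjective) :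
    φ.transpose.Surjective := fun f => by
  obtain ⟨c, hc, h⟩ := hs f
  exact ⟨c.swap, Polyomino.mem_transpose_cells.2 (by simpa using hc),
    show φ.cellMap c.swap.swap = f by rwa [Prod.swap_swap]⟩

lemma RectWithSlits.transpose_horizontal_iSlit {P : Polyomino} {m n : ℕ} {p q : ℤ}
    (h : RectWithSlits P m n (remPair (hE p q) ∪ remPair (hE (p + 1) q))) :
    RectWithSlits P.transpose n m (remPair (vE q p) ∪ remPair (vE q (p + 1))) := by
  constructor
  · ext ⟨x, y⟩
    rw [Polyomino.mem_transpose_cells, h.1, Prod.swap_prod_mk, mem_rectCells, mem_rectCells]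
    omega
  · ext ⟨⟨x, y⟩, ⟨x', y'⟩⟩
    rw [Polyomino.mem_transpose_joins, h.2]
    simp only [Finset.mem_sdiff, fullJoins, Finset.mem_filter, Finset.mem_product,
      Prod.swap_prod_mk, mem_rectCells]
    simp only [cellAdj, remPair, vE, hE, Finset.mem_union, Finset.mem_insert,
      Finset.mem_singleton, Prod.mk.injEq]
    constructor <;> rintro ⟨⟨hrect, hadj⟩, hslit⟩ <;> exact ⟨⟨by omega, by omega⟩, by omega⟩

theorem RectWithISlit2.not_surjective {P : Polyomino} {m n : ℕ} (hP : RectWithISlit2 P m n)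
    (φ : ConsMap P) : ¬ φ.Surjective := by
  obtain ⟨p, q, ⟨⟨hp, hpm, hq, -⟩, -, ⟨-, -, -, hqn⟩, hR⟩ |
    ⟨⟨hp, -, hq, hqn⟩, -, ⟨-, hpm, -, -⟩, hR⟩⟩ := hP
  · exact VerticalISlit.not_surjective ⟨hp, by omega, hq, by omega, hR⟩
  · exact fun hs => VerticalISlit.not_surjective
      ⟨hq, by omega, hp, by omega, hR.transpose_horizontal_iSlit⟩ hs.transpose

lemma _root_.Isometry.map_lineMap {E F : Type*} [NormedAddCommGroup E] [NormedSpace ℝ E]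
    [NormedAddCommGroup F] [NormedSpace ℝ F] [StrictConvexSpace ℝ F] {s : Set E} {g : s → F}
    (hg : Isometry g) {x y z : s} {r : ℝ} (hr₀ : 0 ≤ r) (hr₁ : r ≤ 1)
    (hy : (y : E) = AffineMap.lineMap (x : E) z r) : g y = AffineMap.lineMap (g x) (g z) r := by
  apply eq_lineMap_of_dist_eq_mul_of_dist_eq_mul
  · rw [hg.dist_eq, hg.dist_eq, Subtype.dist_eq, Subtype.dist_eq, hy, dist_left_lineMap,
      Real.norm_of_nonneg hr₀]
  · rw [hg.dist_eq, hg.dist_eq, Subtype.dist_eq, Subtype.dist_eq, hy, dist_lineMap_right,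
      Real.norm_of_nonneg (by linarith)]

lemma lineMap_apply_coord {ι : Type*} (a b : EuclideanSpace ℝ ι) (r : ℝ) (i : ι) :
    AffineMap.lineMap a b r i = AffineMap.lineMap (a i) (b i) r := by
  simp [AffineMap.lineMap_apply_module]

lemma eq_of_lineMap_eq_zero_or_one {a b r e : ℝ} (ha : 0 ≤ a ∧ a ≤ 1) (hb : 0 ≤ b ∧ b ≤ 1)
    (hr : 0 < r ∧ r < 1) (he : e = 0 ∨ e = 1) (h : AffineMap.lineMap a b r = e) :
    a = e ∧ b = e := by
  rw [AffineMap.lineMap_apply_ring'] at h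
  rcases he with rfl | rfl <;> constructor <;>
    nlinarith [mul_nonneg (sub_nonneg.2 hr.2.le) ha.1, mul_nonneg hr.1.le hb.1,
      mul_nonneg (sub_nonneg.2 hr.2.le) (sub_nonneg.2 ha.2), mul_nonneg hr.1.le (sub_nonneg.2 hb.2)]

lemma eq_zero_or_one_of_sq_sub_eq_one {a b : ℝ} (ha : 0 ≤ a ∧ a ≤ 1) (hb : 0 ≤ b ∧ b ≤ 1)
    (h : (a - b) ^ 2 = 1) : a = 0 ∨ a = 1 := by
  have : (a - b - 1) * (a - b + 1) = 0 := by linear_combination h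
  rcases mul_eq_zero.1 this with h | h
  · right; linarith
  · left; linarith

def sqCorner (k : Fin 2 × Fin 2) : unitSq :=
  have h (a : Fin 2) : 0 ≤ ((a : ℕ) : ℝ) ∧ ((a : ℕ) : ℝ) ≤ 1 :=
    ⟨Nat.cast_nonneg _, by exact_mod_cast Nat.le_of_lt_succ a.isLt⟩
  ⟨mk2 ((k.1 : ℕ) : ℝ) ((k.2 : ℕ) : ℝ), (h k.1).1, (h k.1).2, (h k.2).1, (h k.2).2⟩

def cubeVertex (w : Fin 3 → Bool) : R3 := WithLp.toLp 2 fun i => if w i then 1 else 0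

lemma cubeVertex_apply (w : Fin 3 → Bool) (i : Fin 3) :
    cubeVertex w i = if w i then 1 else 0 := rfl

lemma ite_one_zero_injective {a b : Bool} (h : (if a then (1 : ℝ) else 0) = if b then 1 else 0) :
    a = b := by
  cases a <;> cases b <;> first | rfl | norm_num at h

lemma cubeVertex_injective : Function.Injective cubeVertex := fun _ _ h =>
  funext fun i => ite_one_zero_injective (congrArg (· i) h)

lemma dist_sqCorner_sq (k k' : Fin 2 × Fin 2) :
    dist (sqCorner k : R2) (sqCorner k') ^ 2 = kdiff k k' := by
  rw [PiLp.dist_sq_eq_of_L2, Fin.sum_univ_two]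
  obtain ⟨a, b⟩ := k
  obtain ⟨a', b'⟩ := k'
  fin_cases a <;> fin_cases b <;> fin_cases a' <;> fin_cases b' <;>
    norm_num [sqCorner, mk2, kdiff, Real.dist_eq]

lemma dist_cubeVertex_sq (u v : Fin 3 → Bool) :
    dist (cubeVertex u) (cubeVertex v) ^ 2 = vdiff u v := by
  rw [PiLp.dist_sq_eq_of_L2, vdiff, Finset.card_filter, Nat.cast_sum]
  refine Finset.sum_congr rfl fun i _ => ?_
  cases hu : u i <;> cases hv : v i <;> norm_num [cubeVertex_apply, Real.dist_eq, hu, hv]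

lemma eq_zero_or_one_of_dist_sq_eq_two {p q : R3} (hp : ∀ j, 0 ≤ p j ∧ p j ≤ 1)
    (hq : ∀ j, 0 ≤ q j ∧ q j ≤ 1) {i : Fin 3} (hi : p i = q i) (h : dist p q ^ 2 = 2)
    (j : Fin 3) (hj : j ≠ i) : p j = 0 ∨ p j = 1 := by
  have hle : ∀ l, (p l - q l) ^ 2 ≤ 1 := fun l => by nlinarith [hp l, hq l]
  rw [PiLp.dist_sq_eq_of_L2, Fin.sum_univ_three] at h
  simp only [Real.dist_eq, sq_abs] at h
  apply eq_zero_or_one_of_sq_sub_eq_one (hp j) (hq j)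
  fin_cases i <;> fin_cases j <;> simp at hj hi <;> rw [hi] at h <;> simp only [Fin.reduceFinMk] <;>
    linarith [hle 0, hle 1, hle 2]

lemma apply_eq_of_forall_sqCorner_apply_eq {g : unitSq → R3} (hg : Isometry g) {i : Fin 3}
    {e : ℝ} (hcorner : ∀ k, g (sqCorner k) i = e) (x : unitSq) : g x i = e := by
  obtain ⟨x, hx⟩ := x
  let L : unitSq := ⟨mk2 0 (x 1), le_rfl, zero_le_one, hx.2.2⟩
  let R : unitSq := ⟨mk2 1 (x 1), zero_le_one, le_rfl, hx.2.2⟩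
  have hL : g L i = e := by
    rw [hg.map_lineMap (x := sqCorner (0, 0)) (z := sqCorner (0, 1)) hx.2.2.1 hx.2.2.2 (by
        ext j; fin_cases j <;> simp [L, sqCorner, mk2, AffineMap.lineMap_apply_module]),
      lineMap_apply_coord, hcorner, hcorner, AffineMap.lineMap_same_apply]
  have hR : g R i = e := by
    rw [hg.map_lineMap (x := sqCorner (1, 0)) (z := sqCorner (1, 1)) hx.2.2.1 hx.2.2.2 (by
        ext j; fin_cases j <;> simp [R, sqCorner, mk2, AffineMap.lineMap_apply_module]),
      lineMap_apply_coord, hcorner, hcorner, AffineMap.lineMap_same_apply]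
  rw [hg.map_lineMap (x := L) (z := R) hx.1 hx.2.1 (by
      ext j; fin_cases j <;> simp [L, R, mk2, AffineMap.lineMap_apply_module]; ring),
    lineMap_apply_coord, hL, hR, AffineMap.lineMap_same_apply]

/-- The centre of the square is the midpoint of both diagonals, and distance-preserving maps into
the strictly convex `R3` preserve midpoints; so in a coordinate in which the image of the centre is
`0` or `1`, all four corners, and then the whole square, take that same value. The diagonals have
length `√2`, which pins the two remaining coordinates of the corners to `0` or `1`. -/
theorem exists_cubeVertex_of_isometry (g : unitSq → R3) (hg : Isometry g)
    (hC : ∀ x, g x ∈ cubeSurface) :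
    ∃ (w : Fin 2 × Fin 2 → Fin 3 → Bool) (i : Fin 3) (b : Bool),
      (∀ k, g (sqCorner k) = cubeVertex (w k)) ∧ ∀ x, g x i = if b then 1 else 0 := by
  have hbd : ∀ x j, 0 ≤ g x j ∧ g x j ≤ 1 := fun x j => (hC x).1 j
  let m : unitSq := ⟨mk2 (1 / 2) (1 / 2), by norm_num [unitSq, mk2]⟩
  have hm : ∀ k : Fin 2 × Fin 2, (m : R2) =
      AffineMap.lineMap (sqCorner k : R2) (sqCorner (1 - k.1, 1 - k.2)) (1 / 2 : ℝ) := by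
    rintro ⟨a, b⟩
    ext j
    fin_cases a <;> fin_cases b <;> fin_cases j <;>
      norm_num [m, sqCorner, mk2, AffineMap.lineMap_apply_module]
  obtain ⟨i, hi⟩ := (hC m).2
  have hcorner : ∀ k, g (sqCorner k) i = g m i := fun k => by
    have h := congrArg (· i) (hg.map_lineMap (by norm_num) (by norm_num) (hm k))
    simp only [lineMap_apply_coord] at h
    exact (eq_of_lineMap_eq_zero_or_one (hbd _ i) (hbd _ i) (by norm_num) hi h.symm).1
  have hface := apply_eq_of_forall_sqCorner_apply_eq hg hcorner
  have hvert : ∀ k j, g (sqCorner k) j = 0 ∨ g (sqCorner k) j = 1 := by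
    intro k j
    by_cases hj : j = i
    · rw [hj, hcorner]
      exact hi
    · refine eq_zero_or_one_of_dist_sq_eq_two (hbd _) (hbd (sqCorner (1 - k.1, 1 - k.2)))
        (by rw [hcorner, hcorner]) ?_ j hj
      have hdiag : kdiff k (1 - k.1, 1 - k.2) = 2 := by
        revert k
        decide
      rw [hg.dist_eq, Subtype.dist_eq, dist_sqCorner_sq, hdiag, Nat.cast_ofNat]
  refine ⟨fun k j => decide (g (sqCorner k) j = 1), i, decide (g m i = 1), fun k => ?_,
    fun x => ?_⟩
  · ext j
    rw [cubeVertex_apply]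
    rcases hvert k j with h | h <;> simp [h]
  · rw [hface]
    rcases hi with h | h <;> simp [h]

def faceCenter (f : Fin 3 × Bool) : R3 :=
  WithLp.toLp 2 fun j => if j = f.1 then (if f.2 then 1 else 0) else 1 / 2

lemma faceCenter_mem_cubeSurface (f : Fin 3 × Bool) : faceCenter f ∈ cubeSurface := by
  refine ⟨fun j => ?_, f.1, ?_⟩
  · simp only [faceCenter]
    split_ifs <;> norm_num
  · cases f.2 <;> simp [faceCenter]

lemma eq_of_faceCenter_apply {f : Fin 3 × Bool} {i : Fin 3} {b : Bool}
    (h : faceCenter f i = if b then 1 else 0) : (i, b) = f := by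
  obtain ⟨i', b'⟩ := f
  by_cases hi : i = i'
  · subst hi
    simp only [faceCenter] at h
    rw [ite_one_zero_injective h]
  · simp only [faceCenter, if_neg hi] at h
    cases b <;> norm_num at h

lemma cellPt_sqCorner (c : Cell) (k : Fin 2 × Fin 2) :
    cellPt c (sqCorner k) = mk2 (cornerPt c k).1 (cornerPt c k).2 := by
  simp [cellPt, sqCorner, cornerPt, mk2]

lemma pt_sqCorner_eq_of_join {P : Polyomino} {e : Cell × Cell} (he : e ∈ P.joins)
    {k k' : Fin 2 × Fin 2} (h : cornerPt e.1 k = cornerPt e.2 k') :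
    pt P e.1 (P.joins_mem e he).1 _ (sqCorner k).2 =
      pt P e.2 (P.joins_mem e he).2 _ (sqCorner k').2 :=
  Quot.sound ⟨by rw [cellPt_sqCorner, cellPt_sqCorner, h], Or.inr he⟩

theorem exists_surjective_consMap_of_blueprint {P : Polyomino} {β : PolySpace P → R3}
    (hβ : IsBlueprint P β) (hr : Set.range β = cubeSurface) : ∃ φ : ConsMap P, φ.Surjective := by
  have hcell : ∀ c (hc : c ∈ P.cells), ∃ (w : Fin 2 × Fin 2 → Fin 3 → Bool) (i : Fin 3) (b : Bool),
      (∀ k, β (pt P c hc _ (sqCorner k).2) = cubeVertex (w k)) ∧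
        ∀ x (hx : x ∈ unitSq), β (pt P c hc x hx) i = if b then 1 else 0 := fun c hc => by
    obtain ⟨w, i, b, hw, hi⟩ := exists_cubeVertex_of_isometry
      (fun x : unitSq => β (pt P c hc x x.2)) (Isometry.of_dist_eq fun x y => hβ c hc x y x.2 y.2)
      (fun x => hr ▸ Set.mem_range_self _)
    exact ⟨w, i, b, hw, fun x hx => hi ⟨x, hx⟩⟩
  choose w i b hw hi using hcell
  refine ⟨{ cellMap := fun c => if hc : c ∈ P.cells then (i c hc, b c hc) else (0, false)
            vertMap := fun c => if hc : c ∈ P.cells then w c hc else fun _ _ => false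
            vert_on_face := fun c hc k => ?_
            face_iso := fun c hc k k' => ?_
            join_compat := fun e he k k' h => ?_ }, fun f => ?_⟩
  · simp only [dif_pos hc]
    apply ite_one_zero_injective
    rw [← cubeVertex_apply, ← hw, hi]
  · simp only [dif_pos hc]
    rw [← Nat.cast_inj (R := ℝ), ← dist_cubeVertex_sq, ← hw, ← hw, hβ, dist_sqCorner_sq]
  · obtain ⟨h₁, h₂⟩ := P.joins_mem e he
    simp only [dif_pos h₁, dif_pos h₂]
    apply cubeVertex_injective
    rw [← hw, ← hw, pt_sqCorner_eq_of_join he h]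
  · obtain ⟨z, hz⟩ : faceCenter f ∈ Set.range β := hr ▸ faceCenter_mem_cubeSurface f
    obtain ⟨⟨⟨c, hc⟩, x, hx⟩, rfl⟩ := Quot.exists_rep z
    refine ⟨c, hc, ?_⟩
    simp only [dif_pos hc]
    exact eq_of_faceCenter_apply (hz ▸ hi c hc x hx)

theorem FoldsOntoCube.exists_surjective_consMap {P : Polyomino} (h : FoldsOntoCube P) :
    ∃ φ : ConsMap P, φ.Surjective :=
  let ⟨_, _, _, hβ, hr, _⟩ := h
  exists_surjective_consMap_of_blueprint hβ hr

/-- A rectangular polyomino whose only hole is an I-slit of size 2 admits no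
surjective consistent mapping onto the cube; consequently it does not fold onto the cube. -/
theorem rect_islit2_no_surjective_consistent_mapping (P : Polyomino) (m n : ℕ)
    (hP : RectWithISlit2 P m n) :
    (¬ ∃ φ : ConsMap P, φ.Surjective) ∧ ¬ FoldsOntoCube P := by
  have h : ¬ ∃ φ : ConsMap P, φ.Surjective := fun ⟨φ, hs⟩ => hP.not_surjective φ hs
  exact ⟨h, fun hF => h hF.exists_surjective_consMap⟩

end CubeFold
end
end

section
/- Let P be a polyomino and let P' be a rectangular sub-polyomino of P whose interior contains no point of the boundary of P. Then every consistent mapping φ from P to the surface C of the unit cube is constant on each row of P' or constant on each column of P', i.e. either any two cells of P' in a common row are mapped to the same face of C, or any two cells of P' in a common column are mapped to the same face of C. -/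
/-!
Common formal framework: polyominoes (as square complexes with possible slits),
their topological realisations, folded states, ambient isotopy, foldings onto the
surface of the unit cube, unlinks, and consistent mappings.
-/

open Classical
noncomputable section

namespace CubeFold

/-!
Around an interior lattice vertex of the rectangle, the four cells are mapped to the four faces
through one cube vertex `u`, and the four lattice edges at that vertex to edges at `u`. Since `u`
has only three neighbours, two opposite lattice edges have the same image, and then the two cells
on either side of that line go to the same face: every `2 × 2` square is constant on its rows or
on its columns. In either case a square carries equality of its two bottom values to its top row
and equality of its two left values to its right column, so the alternative chosen by one square
is forced on the whole rectangle.
-/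

/-- `u` is a corner of the face `f` of the cube and `w₁`, `w₂` are the two vertices of `f`
adjacent to it. -/
structure IsCorner (f : Fin 3 × Bool) (u w₁ w₂ : Fin 3 → Bool) : Prop where
  vdiff_left : vdiff u w₁ = 1
  vdiff_right : vdiff u w₂ = 1
  ne : w₁ ≠ w₂
  mem : u f.1 = f.2
  mem_left : w₁ f.1 = f.2
  mem_right : w₂ f.1 = f.2

lemma vdiff_self (u : Fin 3 → Bool) : vdiff u u = 0 := by
  simp [vdiff]

lemma exists_eq_update_of_vdiff_eq_one {u w : Fin 3 → Bool} (h : vdiff u w = 1) :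
    ∃ i, w = Function.update u i (!u i) := by
  obtain ⟨i, hi⟩ := Finset.card_eq_one.mp h
  have hmem : ∀ j, u j ≠ w j ↔ j = i := fun j => by
    simpa using congrArg (j ∈ ·) hi
  refine ⟨i, funext fun j => ?_⟩
  rcases eq_or_ne j i with rfl | hj
  · simpa using Bool.eq_not.mpr ((hmem j).mpr rfl).symm
  · simpa [hj] using (not_not.mp (mt (hmem j).mp hj)).symm

/-- The vertex `u` of the cube has only three neighbours. -/
lemma eq_or_eq_of_cyclic_neighbours {u w₁ w₂ w₃ w₄ : Fin 3 → Bool}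
    (h₁ : vdiff u w₁ = 1) (h₂ : vdiff u w₂ = 1) (h₃ : vdiff u w₃ = 1) (h₄ : vdiff u w₄ = 1)
    (h₁₂ : w₁ ≠ w₂) (h₂₃ : w₂ ≠ w₃) (h₃₄ : w₃ ≠ w₄) (h₄₁ : w₄ ≠ w₁) :
    w₁ = w₃ ∨ w₂ = w₄ := by
  obtain ⟨i₁, rfl⟩ := exists_eq_update_of_vdiff_eq_one h₁
  obtain ⟨i₂, rfl⟩ := exists_eq_update_of_vdiff_eq_one h₂
  obtain ⟨i₃, rfl⟩ := exists_eq_update_of_vdiff_eq_one h₃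
  obtain ⟨i₄, rfl⟩ := exists_eq_update_of_vdiff_eq_one h₄
  have key : ∀ a b c d : Fin 3, a ≠ b → b ≠ c → c ≠ d → d ≠ a → a = c ∨ b = d := by decide
  rcases key i₁ i₂ i₃ i₄ (by rintro rfl; exact h₁₂ rfl) (by rintro rfl; exact h₂₃ rfl)
    (by rintro rfl; exact h₃₄ rfl) (by rintro rfl; exact h₄₁ rfl) with rfl | rfl
  · exact Or.inl rfl
  · exact Or.inr rfl

lemma IsCorner.symm {f : Fin 3 × Bool} {u w₁ w₂ : Fin 3 → Bool} (h : IsCorner f u w₁ w₂) :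
    IsCorner f u w₂ w₁ :=
  ⟨h.vdiff_right, h.vdiff_left, h.ne.symm, h.mem, h.mem_right, h.mem_left⟩

lemma IsCorner.face_eq {f g : Fin 3 × Bool} {u w₁ w₂ : Fin 3 → Bool}
    (hf : IsCorner f u w₁ w₂) (hg : IsCorner g u w₁ w₂) : f = g := by
  obtain ⟨i₁, rfl⟩ := exists_eq_update_of_vdiff_eq_one hf.vdiff_left
  obtain ⟨i₂, rfl⟩ := exists_eq_update_of_vdiff_eq_one hf.vdiff_right
  have normal_ne : ∀ {h : Fin 3 × Bool} {i}, u h.1 = h.2 →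
      Function.update u i (!u i) h.1 = h.2 → h.1 ≠ i := by
    rintro h i hu hw rfl
    simp [hu] at hw
  have key : ∀ a b i j : Fin 3, i ≠ j → a ≠ i → a ≠ j → b ≠ i → b ≠ j → a = b := by decide
  have hnormal : f.1 = g.1 := key _ _ i₁ i₂ (by rintro rfl; exact hf.ne rfl)
    (normal_ne hf.mem hf.mem_left) (normal_ne hf.mem hf.mem_right)
    (normal_ne hg.mem hg.mem_left) (normal_ne hg.mem hg.mem_right)
  exact Prod.ext hnormal (by rw [← hf.mem, ← hg.mem, hnormal])

namespace ConsMap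

variable {P : Polyomino} (φ : ConsMap P)

lemma isCorner {c : Cell} (hc : c ∈ P.cells) {k k₁ k₂ : Fin 2 × Fin 2}
    (h₁ : kdiff k k₁ = 1) (h₂ : kdiff k k₂ = 1) (h₁₂ : kdiff k₁ k₂ = 2) :
    IsCorner (φ.cellMap c) (φ.vertMap c k) (φ.vertMap c k₁) (φ.vertMap c k₂) where
  vdiff_left := (φ.face_iso c hc k k₁).trans h₁
  vdiff_right := (φ.face_iso c hc k k₂).trans h₂
  ne h := by simpa [h, vdiff_self, h₁₂] using φ.face_iso c hc k₁ k₂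
  mem := φ.vert_on_face c hc k
  mem_left := φ.vert_on_face c hc k₁
  mem_right := φ.vert_on_face c hc k₂

lemma square_rows_or_columns {x y : ℤ}
    (hAB : (((x, y) : Cell), ((x + 1, y) : Cell)) ∈ P.joins)
    (hAC : (((x, y) : Cell), ((x, y + 1) : Cell)) ∈ P.joins)
    (hBD : (((x + 1, y) : Cell), ((x + 1, y + 1) : Cell)) ∈ P.joins)
    (hCD : (((x, y + 1) : Cell), ((x + 1, y + 1) : Cell)) ∈ P.joins) :
    (φ.cellMap (x, y) = φ.cellMap (x + 1, y) ∧
      φ.cellMap (x, y + 1) = φ.cellMap (x + 1, y + 1)) ∨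
    (φ.cellMap (x, y) = φ.cellMap (x, y + 1) ∧
      φ.cellMap (x + 1, y) = φ.cellMap (x + 1, y + 1)) := by
  have eAB₁ := φ.join_compat _ hAB (1, 1) (0, 1) (by simp [cornerPt])
  have eAB₂ := φ.join_compat _ hAB (1, 0) (0, 0) (by simp [cornerPt])
  have eAC := φ.join_compat _ hAC (0, 1) (0, 0) (by simp [cornerPt])
  have eBD₁ := φ.join_compat _ hBD (0, 1) (0, 0) (by simp [cornerPt])
  have eBD₂ := φ.join_compat _ hBD (1, 1) (1, 0) (by simp [cornerPt])
  have eCD₁ := φ.join_compat _ hCD (1, 0) (0, 0) (by simp [cornerPt])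
  have eCD₂ := φ.join_compat _ hCD (1, 1) (0, 1) (by simp [cornerPt])
  simp only at eAB₁ eAB₂ eAC eBD₁ eBD₂ eCD₁ eCD₂
  have cA := φ.isCorner (P.joins_mem _ hAB).1 (k := (1, 1)) (k₁ := (0, 1)) (k₂ := (1, 0))
    (by decide) (by decide) (by decide)
  have cB := φ.isCorner (P.joins_mem _ hAB).2 (k := (0, 1)) (k₁ := (0, 0)) (k₂ := (1, 1))
    (by decide) (by decide) (by decide)
  have cC := φ.isCorner (P.joins_mem _ hAC).2 (k := (1, 0)) (k₁ := (1, 1)) (k₂ := (0, 0))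
    (by decide) (by decide) (by decide)
  have cD := φ.isCorner (P.joins_mem _ hBD).2 (k := (0, 0)) (k₁ := (1, 0)) (k₂ := (0, 1))
    (by decide) (by decide) (by decide)
  rw [eAB₁, eBD₁, eAC, eAB₂] at cA
  rw [eBD₁, eBD₂] at cB
  rw [eCD₁, eCD₂] at cC
  -- each cell is now a corner at `u := φ.vertMap (x + 1, y + 1) (0, 0)`, between consecutive
  -- images of the left, lower, right and upper lattice edges at the central vertex
  rcases eq_or_eq_of_cyclic_neighbours cA.vdiff_left cA.vdiff_right cB.vdiff_right
    cD.vdiff_right cA.ne cB.ne cD.ne cC.ne with h | h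
  · rw [← h] at cB cD
    exact Or.inl ⟨cA.face_eq cB.symm, cC.face_eq cD.symm⟩
  · rw [h] at cA cB
    exact Or.inr ⟨cA.face_eq cC.symm, cB.face_eq cD.symm⟩

end ConsMap

lemma apply_eq_apply_on_Ico_of_succ {α : Type*} (f : ℤ → α) {lo hi : ℤ}
    (h : ∀ t, lo ≤ t → t + 1 < hi → f t = f (t + 1)) :
    ∀ s ∈ Set.Ico lo hi, ∀ t ∈ Set.Ico lo hi, f s = f t := by
  have eq_lo : ∀ s, lo ≤ s → s < hi → f s = f lo := fun s hs =>
    Int.leInduction (motive := fun s _ => s < hi → f s = f lo) (fun _ => rfl)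
      (fun n hn ih hlt => (h n hn hlt).symm.trans (ih (by omega))) s hs
  rintro s ⟨hs, hs'⟩ t ⟨ht, ht'⟩
  rw [eq_lo s hs hs', eq_lo t ht ht']

lemma rows_or_columns_of_squares {α : Type*} (F : ℤ → ℤ → α) {x₀ x₁ y₀ y₁ : ℤ}
    (hsq : ∀ p q, x₀ ≤ p → p + 1 < x₁ → y₀ ≤ q → q + 1 < y₁ →
      (F p q = F (p + 1) q ∧ F p (q + 1) = F (p + 1) (q + 1)) ∨
      (F p q = F p (q + 1) ∧ F (p + 1) q = F (p + 1) (q + 1))) :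
    (∀ q ∈ Set.Ico y₀ y₁, ∀ p ∈ Set.Ico x₀ x₁, ∀ p' ∈ Set.Ico x₀ x₁, F p q = F p' q) ∨
    (∀ p ∈ Set.Ico x₀ x₁, ∀ q ∈ Set.Ico y₀ y₁, ∀ q' ∈ Set.Ico y₀ y₁, F p q = F p q') := by
  by_cases hrow : ∀ p q, x₀ ≤ p → p + 1 < x₁ → y₀ ≤ q → q < y₁ → F p q = F (p + 1) q
  · exact Or.inl fun q ⟨hq, hq'⟩ => apply_eq_apply_on_Ico_of_succ (F · q)
      fun p hp hp' => hrow p q hp hp' hq hq'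
  push Not at hrow
  obtain ⟨p₁, q₁, hp₁, hp₁', hq₁, hq₁', hne⟩ := hrow
  have hne_all : ∀ q ∈ Set.Ico y₀ y₁, F p₁ q ≠ F (p₁ + 1) q := by
    refine fun q hq => (apply_eq_apply_on_Ico_of_succ (fun q => F p₁ q ≠ F (p₁ + 1) q)
      (fun q h h' => ?_) q hq q₁ ⟨hq₁, hq₁'⟩).mpr hne
    rcases hsq p₁ q hp₁ hp₁' h h' with ⟨e, e'⟩ | ⟨e, e'⟩
    · simp [e, e']
    · rw [e, e']
  have hcol : ∀ p, x₀ ≤ p → p < x₁ → ∀ q, y₀ ≤ q → q + 1 < y₁ → F p q = F p (q + 1) := by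
    intro p hp hp' q hq hq'
    refine (apply_eq_apply_on_Ico_of_succ (fun p => F p q = F p (q + 1))
      (fun p h h' => ?_) p ⟨hp, hp'⟩ p₁ ⟨hp₁, by omega⟩).mpr ?_
    · rcases hsq p q h h' hq hq' with ⟨e, e'⟩ | ⟨e, e'⟩
      · rw [e, e']
      · simp [e, e']
    · rcases hsq p₁ q hp₁ hp₁' hq hq' with ⟨e, -⟩ | ⟨e, -⟩
      · exact absurd e (hne_all q ⟨hq, by omega⟩)
      · exact e
  exact Or.inr fun p ⟨hp, hp'⟩ => apply_eq_apply_on_Ico_of_succ (F p)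
    fun q hq hq' => hcol p hp hp' q hq hq'

theorem consMap_constant_on_rows_or_columns_general (P : Polyomino)
    (x0 y0 : ℤ) (a b : ℕ)
    (hjoins : ∀ c d : Cell, x0 ≤ c.1 → c.1 < x0 + a → y0 ≤ c.2 → c.2 < y0 + b →
      x0 ≤ d.1 → d.1 < x0 + a → y0 ≤ d.2 → d.2 < y0 + b → cellAdj c d → (c, d) ∈ P.joins)
    (φ : ConsMap P) :
    (∀ c d : Cell, x0 ≤ c.1 → c.1 < x0 + a → y0 ≤ c.2 → c.2 < y0 + b →
      x0 ≤ d.1 → d.1 < x0 + a → y0 ≤ d.2 → d.2 < y0 + b →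
      c.2 = d.2 → φ.cellMap c = φ.cellMap d) ∨
    (∀ c d : Cell, x0 ≤ c.1 → c.1 < x0 + a → y0 ≤ c.2 → c.2 < y0 + b →
      x0 ≤ d.1 → d.1 < x0 + a → y0 ≤ d.2 → d.2 < y0 + b →
      c.1 = d.1 → φ.cellMap c = φ.cellMap d) := by
  have hsq := rows_or_columns_of_squares (fun p q => φ.cellMap (p, q))
    (x₀ := x0) (x₁ := x0 + a) (y₀ := y0) (y₁ := y0 + b) fun p q hp hp' hq hq' =>
      φ.square_rows_or_columns
        (hjoins _ _ hp (by omega) hq (by omega) (by omega) hp' hq (by omega)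
          (by simp [cellAdj]))
        (hjoins _ _ hp (by omega) hq (by omega) hp (by omega) (by omega) hq'
          (by simp [cellAdj]))
        (hjoins _ _ (by omega) hp' hq (by omega) (by omega) hp' (by omega) hq'
          (by simp [cellAdj]))
        (hjoins _ _ hp (by omega) (by omega) hq' (by omega) hp' (by omega) hq'
          (by simp [cellAdj]))
  refine hsq.imp (fun hrow => ?_) fun hcol => ?_
  · rintro ⟨p, q⟩ ⟨p', q'⟩ hp hp' hq hq' hp₁ hp₁' - - (rfl : q = q')
    exact hrow q ⟨hq, hq'⟩ p ⟨hp, hp'⟩ p' ⟨hp₁, hp₁'⟩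
  · rintro ⟨p, q⟩ ⟨p', q'⟩ hp hp' hq hq' - - hq₁ hq₁' (rfl : p = p')
    exact hcol p ⟨hp, hp'⟩ q ⟨hq, hq'⟩ q' ⟨hq₁, hq₁'⟩

/-- If `P'` is a rectangular sub-polyomino of `P` (an `a × b` block of cells
of `P`, all present and pairwise joined) whose interior contains no point of the boundary of
`P`, then every consistent mapping from `P` to the cube is constant on each row of `P'` or
constant on each column of `P'`. -/
theorem consMap_constant_on_rows_or_columns (P : Polyomino)
    (x0 y0 : ℤ) (a b : ℕ)
    (hcells : ∀ c : Cell, x0 ≤ c.1 → c.1 < x0 + a → y0 ≤ c.2 → c.2 < y0 + b → c ∈ P.cells)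
    (hjoins : ∀ c d : Cell, x0 ≤ c.1 → c.1 < x0 + a → y0 ≤ c.2 → c.2 < y0 + b →
      x0 ≤ d.1 → d.1 < x0 + a → y0 ≤ d.2 → d.2 < y0 + b → cellAdj c d → (c, d) ∈ P.joins)
    (hint : (flatMap P '' polyBoundary P) ∩
      {x : R2 | (x0 : ℝ) < x 0 ∧ x 0 < x0 + a ∧ (y0 : ℝ) < x 1 ∧ x 1 < y0 + b} = ∅)
    (φ : ConsMap P) :
    (∀ c d : Cell, x0 ≤ c.1 → c.1 < x0 + a → y0 ≤ c.2 → c.2 < y0 + b →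
      x0 ≤ d.1 → d.1 < x0 + a → y0 ≤ d.2 → d.2 < y0 + b →
      c.2 = d.2 → φ.cellMap c = φ.cellMap d) ∨
    (∀ c d : Cell, x0 ≤ c.1 → c.1 < x0 + a → y0 ≤ c.2 → c.2 < y0 + b →
      x0 ≤ d.1 → d.1 < x0 + a → y0 ≤ d.2 → d.2 < y0 + b →
      c.1 = d.1 → φ.cellMap c = φ.cellMap d) :=
  consMap_constant_on_rows_or_columns_general P x0 y0 a b hjoins φ

end CubeFold
end
end
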